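/- With A₃(k) = λ₁(k)·⟨v₂(k), Ψ̂₀⟩·⟨v₁(k), Ĥ(k)v₂(k)⟩ and A₄(k) = λ₂(k)·⟨v₁(k), Ψ̂₀⟩·⟨v₂(k), Ĥ(k)v₁(k)⟩, one has (1/2π)·∫_{−π}^{π} (|A₃(k)|² + |A₄(k)|²) dk = (c₁s − s₁c)²/(1 + |s|); in particular this value is independent of the initial state Ψ̂₀ = (α, β)ᵀ with |α|² + |β|² = 1. -/

import Mathlib

open Filter Matrix

/-- `R(k) = diag(e^{ik}, e^{-ik})`. -/
noncomputable def Rmat (k : ℝ) : Matrix (Fin 2) (Fin 2) ℂ :=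
  !![Complex.exp (Complex.I * k), 0; 0, Complex.exp (-(Complex.I * k))]

/-- The coin `[[a, b], [b, -a]]` as a complex matrix. -/
noncomputable def Umat (a b : ℝ) : Matrix (Fin 2) (Fin 2) ℂ :=
  !![(a : ℂ), (b : ℂ); (b : ℂ), -(a : ℂ)]

/-- The eigenvalue `λ(k) = sgn·√(1 − c²sin²k) + i·c·sin k` of `Û(k)`
(`sgn = 1` gives `λ₁`, `sgn = -1` gives `λ₂`). -/
noncomputable def lam (c sgn : ℝ) (k : ℝ) : ℂ :=
  ((sgn * Real.sqrt (1 - c ^ 2 * Real.sin k ^ 2) : ℝ) : ℂ)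
    + Complex.I * ((c * Real.sin k : ℝ) : ℂ)

/-- The normalized eigenvector of `Û(k)` for the eigenvalue `lam c sgn k`. -/
noncomputable def evec (c s sgn : ℝ) (k : ℝ) : Fin 2 → ℂ :=
  fun j =>
    ((Real.sqrt ((Real.sqrt (1 - c ^ 2 * Real.sin k ^ 2) + sgn * c * Real.cos k)
        / (2 * s ^ 2 * Real.sqrt (1 - c ^ 2 * Real.sin k ^ 2))) : ℝ) : ℂ)
      * ![(s : ℂ) * Complex.exp (Complex.I * k),
          ((sgn * Real.sqrt (1 - c ^ 2 * Real.sin k ^ 2) - c * Real.cos k : ℝ) : ℂ)] j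

/-- The Hermitian inner product on `ℂ²`, conjugate-linear in the first argument. -/
noncomputable def cip (u w : Fin 2 → ℂ) : ℂ :=
  (starRingEnd ℂ) (u 0) * w 0 + (starRingEnd ℂ) (u 1) * w 1

/-- `A₃(k) = λ₁(k)·⟨v₂(k), Ψ̂₀⟩·⟨v₁(k), Ĥ(k)v₂(k)⟩`. -/
noncomputable def Athree (c s c₁ s₁ : ℝ) (α β : ℂ) (k : ℝ) : ℂ :=
  lam c 1 k * cip (evec c s (-1) k) ![α, β]
    * cip (evec c s 1 k) ((Rmat k * Umat c₁ s₁).mulVec (evec c s (-1) k))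

/-- `A₄(k) = λ₂(k)·⟨v₁(k), Ψ̂₀⟩·⟨v₂(k), Ĥ(k)v₁(k)⟩`. -/
noncomputable def Afour (c s c₁ s₁ : ℝ) (α β : ℂ) (k : ℝ) : ℂ :=
  lam c (-1) k * cip (evec c s 1 k) ![α, β]
    * cip (evec c s (-1) k) ((Rmat k * Umat c₁ s₁).mulVec (evec c s 1 k))

/-!
The eigenvectors `v₁, v₂` are orthonormal, so `|⟨v₁, Ψ̂₀⟩|² + |⟨v₂, Ψ̂₀⟩|² = 1`, and `|λⱼ| = 1`.
Both transition amplitudes `⟨v₁, Ĥ v₂⟩` and `⟨v₂, Ĥ v₁⟩` equal the real number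
`2 n₁ n₂ s cos k (c₁ s − s₁ c)` (`nⱼ` the normalising factors), whose square is
`(c₁ s − s₁ c)² cos² k / (1 − c² sin² k)`. The integrand is therefore this function, independently
of `Ψ̂₀`, and `∫_{−π}^{π} cos² k / (1 − a sin² k) dk = 2π / (1 + √(1 − a))` follows from an
arctangent antiderivative.
-/

open Real ComplexConjugate

theorem one_sub_mul_sin_sq_pos {a : ℝ} (ha : a < 1) (k : ℝ) : 0 < 1 - a * sin k ^ 2 := by
  have h : (1 - a * sin k ^ 2) * (2 - a) = (1 - a) + cos k ^ 2 + ((1 - a) * sin k) ^ 2 := by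
    linear_combination (-1 : ℝ) * sin_sq_add_cos_sq k
  nlinarith [sq_nonneg (cos k), sq_nonneg ((1 - a) * sin k)]

theorem hasDerivAt_arctan_antiderivative {a b : ℝ} (ha : a ≠ 0) (hb : 0 < b)
    (hab : b ^ 2 = 1 - a) (k : ℝ) :
    HasDerivAt
      (fun k => k / (1 + b) + b / a * arctan (a * sin k * cos k / (1 + b - a * sin k ^ 2)))
      (cos k ^ 2 / (1 - a * sin k ^ 2)) k := by
  have hE := one_sub_mul_sin_sq_pos (a := a) (by nlinarith) k
  have hD : 1 + b - a * sin k ^ 2 ≠ 0 := by linarith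
  have hu := (((hasDerivAt_sin k).const_mul a).mul (hasDerivAt_cos k)).div
    ((((hasDerivAt_sin k).pow 2).const_mul a).const_sub (1 + b)) hD
  refine (((hasDerivAt_id k).div_const (1 + b)).add (hu.arctan.const_mul (b / a))).congr_deriv ?_
  obtain rfl : a = 1 - b ^ 2 := by linarith
  simp only [Pi.mul_apply, Pi.pow_apply, Pi.div_apply, Nat.cast_ofNat]
  field_simp
  rw [cos_sq']
  ring

theorem integral_cos_sq_div_one_sub_mul_sin_sq {a : ℝ} (ha : a < 1) :
    ∫ k in -π..π, cos k ^ 2 / (1 - a * sin k ^ 2) = 2 * π / (1 + √(1 - a)) := by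
  -- the antiderivative divides by `a`
  rcases eq_or_ne a 0 with rfl | ha0
  · norm_num [integral_cos_sq]
  have hb : 0 < √(1 - a) := Real.sqrt_pos.2 (by linarith)
  have hF := hasDerivAt_arctan_antiderivative ha0 hb (Real.sq_sqrt (by linarith))
  have hcont : Continuous fun k => cos k ^ 2 / (1 - a * sin k ^ 2) :=
    (continuous_cos.pow 2).div (by fun_prop) fun k => (one_sub_mul_sin_sq_pos ha k).ne'
  rw [intervalIntegral.integral_eq_sub_of_hasDerivAt (fun k _ => hF k)
    (hcont.intervalIntegrable _ _)]
  simp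
  field_simp
  ring

theorem Complex.normSq_add_normSq_of_orthogonal {a b c d : ℝ} (hac : a ^ 2 + c ^ 2 = 1)
    (hbd : b ^ 2 + d ^ 2 = 1) (habcd : a * b + c * d = 0) (z w : ℂ) :
    Complex.normSq (a * z + b * w) + Complex.normSq (c * z + d * w) =
      Complex.normSq z + Complex.normSq w := by
  simp only [Complex.normSq_apply, Complex.add_re, Complex.add_im, Complex.re_ofReal_mul,
    Complex.im_ofReal_mul]
  linear_combination (z.re ^ 2 + z.im ^ 2) * hac + (w.re ^ 2 + w.im ^ 2) * hbd
    + 2 * (z.re * w.re + z.im * w.im) * habcd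

theorem conj_exp_I_mul (k : ℝ) :
    conj (Complex.exp (Complex.I * k)) = Complex.exp (-(Complex.I * k)) := by
  rw [← Complex.exp_conj]
  simp

theorem exp_neg_I_mul_mul_exp_I_mul (k : ℝ) :
    Complex.exp (-(Complex.I * k)) * Complex.exp (Complex.I * k) = 1 := by
  rw [← Complex.exp_add, neg_add_cancel, Complex.exp_zero]

theorem exp_I_mul_add_exp_neg_I_mul (k : ℝ) :
    Complex.exp (Complex.I * k) + Complex.exp (-(Complex.I * k)) = 2 * Complex.cos k := by
  rw [Complex.two_cos, mul_comm, neg_mul]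

theorem Rmat_mul_Umat_mulVec (k a b : ℝ) (v : Fin 2 → ℂ) :
    (Rmat k * Umat a b) *ᵥ v =
      ![Complex.exp (Complex.I * k) * (a * v 0 + b * v 1),
        Complex.exp (-(Complex.I * k)) * (b * v 0 - a * v 1)] := by
  ext j
  fin_cases j <;> simp [Rmat, Umat, Matrix.mulVec, dotProduct, Fin.sum_univ_two] <;> ring

theorem cip_ofReal_smul_left (r : ℝ) (u w : Fin 2 → ℂ) :
    cip ((r : ℂ) • u) w = r * cip u w := by
  simp only [cip, Pi.smul_apply, smul_eq_mul, map_mul, Complex.conj_ofReal]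
  ring

theorem cip_smul_right (z : ℂ) (u w : Fin 2 → ℂ) : cip u (z • w) = z * cip u w := by
  simp only [cip, Pi.smul_apply, smul_eq_mul]
  ring

theorem lam_normSq {c sgn : ℝ} (hc : c ^ 2 ≤ 1) (hsgn : sgn ^ 2 = 1) (k : ℝ) :
    Complex.normSq (lam c sgn k) = 1 := by
  have h : 0 ≤ 1 - c ^ 2 * sin k ^ 2 := by nlinarith [sin_sq_le_one k]
  rw [lam, mul_comm Complex.I, Complex.normSq_add_mul_I, mul_pow, Real.sq_sqrt h, hsgn]
  ring

noncomputable def sqrtDisc (c k : ℝ) : ℝ := √(1 - c ^ 2 * sin k ^ 2)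

noncomputable def evecNorm (c s sgn k : ℝ) : ℝ :=
  √((sqrtDisc c k + sgn * c * cos k) / (2 * s ^ 2 * sqrtDisc c k))

noncomputable def evecDir (c s sgn k : ℝ) : Fin 2 → ℂ :=
  ![s * Complex.exp (Complex.I * k), ((sgn * sqrtDisc c k - c * cos k : ℝ) : ℂ)]

theorem evec_eq_smul (c s sgn k : ℝ) :
    evec c s sgn k = (evecNorm c s sgn k : ℂ) • evecDir c s sgn k := by
  ext j
  fin_cases j <;> rfl

theorem cip_evec (c s sgn k : ℝ) (ψ : Fin 2 → ℂ) :
    cip (evec c s sgn k) ψ =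
      ((evecNorm c s sgn k * s : ℝ) : ℂ) * (Complex.exp (-(Complex.I * k)) * ψ 0)
        + ((evecNorm c s sgn k * (sgn * sqrtDisc c k - c * cos k) : ℝ) : ℂ) * ψ 1 := by
  rw [evec_eq_smul, cip_ofReal_smul_left]
  simp only [cip, evecDir, Matrix.cons_val_zero, Matrix.cons_val_one, map_mul,
    Complex.conj_ofReal, conj_exp_I_mul]
  push_cast
  ring

section

variable {c s : ℝ} (hcs : c ^ 2 + s ^ 2 = 1) (hs : s ≠ 0)
include hcs

theorem sqrtDisc_sq (k : ℝ) : sqrtDisc c k ^ 2 = 1 - c ^ 2 * sin k ^ 2 :=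
  Real.sq_sqrt (by nlinarith [sin_sq_le_one k])

theorem sqrtDisc_sq_sub_sq (k : ℝ) : sqrtDisc c k ^ 2 - (c * cos k) ^ 2 = s ^ 2 := by
  rw [sqrtDisc_sq hcs]
  linear_combination (-c ^ 2) * sin_sq_add_cos_sq k - hcs

theorem cip_evecDir_mulVec_evecDir {sgn : ℝ} (hsgn : sgn ^ 2 = 1) (c₁ s₁ k : ℝ) :
    cip (evecDir c s sgn k) ((Rmat k * Umat c₁ s₁) *ᵥ evecDir c s (-sgn) k) =
      ((2 * s * cos k * (c₁ * s - s₁ * c) : ℝ) : ℂ) := by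
  have hUW : (sgn * sqrtDisc c k - c * cos k) * (-sgn * sqrtDisc c k - c * cos k) = -s ^ 2 := by
    linear_combination (-sqrtDisc c k ^ 2) * hsgn - sqrtDisc_sq_sub_sq hcs k
  have hUW' : ((sgn * sqrtDisc c k - c * cos k : ℝ) : ℂ) *
      ((-sgn * sqrtDisc c k - c * cos k : ℝ) : ℂ) = -s ^ 2 := by
    exact_mod_cast hUW
  rw [Rmat_mul_Umat_mulVec]
  simp only [cip, evecDir, Matrix.cons_val_zero, Matrix.cons_val_one, map_mul,
    Complex.conj_ofReal, conj_exp_I_mul]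
  set e := Complex.exp (Complex.I * k)
  set e' := Complex.exp (-(Complex.I * k))
  push_cast at hUW' ⊢
  linear_combination (s * (c₁ * s * e + s₁ * (-sgn * sqrtDisc c k - c * Complex.cos k))
      + (sgn * sqrtDisc c k - c * Complex.cos k) * s₁ * s) * exp_neg_I_mul_mul_exp_I_mul k
    - c₁ * e' * hUW' + c₁ * s ^ 2 * exp_I_mul_add_exp_neg_I_mul k

include hs

theorem sqrtDisc_pos (k : ℝ) : 0 < sqrtDisc c k :=
  Real.sqrt_pos.2 (by nlinarith [sin_sq_le_one k, sq_pos_of_ne_zero hs])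

theorem evecNorm_sq_mul {sgn : ℝ} (hsgn : sgn ^ 2 = 1) (k : ℝ) :
    evecNorm c s sgn k ^ 2 * (2 * s ^ 2 * sqrtDisc c k) = sqrtDisc c k + sgn * c * cos k := by
  have hN := sqrtDisc_pos hcs hs k
  have hNC := sqrtDisc_sq_sub_sq hcs k
  have hnum : 0 ≤ sqrtDisc c k + sgn * c * cos k := by
    nlinarith [sq_nonneg (sgn * c * cos k), sq_nonneg s]
  rw [evecNorm, Real.sq_sqrt (div_nonneg hnum (by positivity)),
    div_mul_cancel₀ _ (by positivity)]

theorem normSq_cip_evec_add_normSq_cip_evec (k : ℝ) (ψ : Fin 2 → ℂ) :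
    Complex.normSq (cip (evec c s 1 k) ψ) + Complex.normSq (cip (evec c s (-1) k) ψ) =
      Complex.normSq (ψ 0) + Complex.normSq (ψ 1) := by
  have hN := sqrtDisc_pos hcs hs k
  have hNC := sqrtDisc_sq_sub_sq hcs k
  have hp := evecNorm_sq_mul hcs hs (one_pow 2) k
  have hm := evecNorm_sq_mul hcs hs (by norm_num : (-1 : ℝ) ^ 2 = 1) k
  have hQ : 2 * s ^ 2 * sqrtDisc c k ≠ 0 := by positivity
  rw [cip_evec, cip_evec, Complex.normSq_add_normSq_of_orthogonal, Complex.normSq_mul]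
  · simp [Complex.normSq_eq_norm_sq, Complex.norm_exp]
  · apply mul_right_cancel₀ hQ
    linear_combination s ^ 2 * hp + s ^ 2 * hm
  · apply mul_right_cancel₀ hQ
    linear_combination (sqrtDisc c k - c * cos k) ^ 2 * hp
      + (sqrtDisc c k + c * cos k) ^ 2 * hm + 2 * sqrtDisc c k * hNC
  · apply mul_right_cancel₀ hQ
    linear_combination s * (sqrtDisc c k - c * cos k) * hp
      - s * (sqrtDisc c k + c * cos k) * hm

theorem normSq_cip_evec_mulVec_evec {sgn : ℝ} (hsgn : sgn ^ 2 = 1) (c₁ s₁ k : ℝ) :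
    Complex.normSq (cip (evec c s sgn k) ((Rmat k * Umat c₁ s₁) *ᵥ evec c s (-sgn) k)) =
      (c₁ * s - s₁ * c) ^ 2 * cos k ^ 2 / (1 - c ^ 2 * sin k ^ 2) := by
  have hN := sqrtDisc_pos hcs hs k
  have hp := evecNorm_sq_mul hcs hs hsgn k
  have hm := evecNorm_sq_mul hcs hs (by rw [neg_sq, hsgn]) k
  have hnorm :
      (evecNorm c s sgn k * evecNorm c s (-sgn) k) ^ 2 * (2 * s * sqrtDisc c k) ^ 2 = 1 := by
    apply mul_left_cancel₀ (pow_ne_zero 2 hs)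
    linear_combination (evecNorm c s (-sgn) k ^ 2 * (2 * s ^ 2 * sqrtDisc c k)) * hp
      + (sqrtDisc c k + sgn * c * cos k) * hm + sqrtDisc_sq_sub_sq hcs k
      - (c * cos k) ^ 2 * hsgn
  rw [evec_eq_smul, evec_eq_smul, Matrix.mulVec_smul, cip_ofReal_smul_left, cip_smul_right,
    cip_evecDir_mulVec_evecDir hcs hsgn, ← Complex.ofReal_mul, ← Complex.ofReal_mul,
    Complex.normSq_ofReal, ← sqrtDisc_sq hcs, eq_div_iff (by positivity)]
  linear_combination ((c₁ * s - s₁ * c) ^ 2 * cos k ^ 2) * hnorm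

theorem normSq_Athree_add_normSq_Afour (c₁ s₁ : ℝ) {α β : ℂ}
    (hαβ : Complex.normSq α + Complex.normSq β = 1) (k : ℝ) :
    Complex.normSq (Athree c s c₁ s₁ α β k) + Complex.normSq (Afour c s c₁ s₁ α β k) =
      (c₁ * s - s₁ * c) ^ 2 * cos k ^ 2 / (1 - c ^ 2 * sin k ^ 2) := by
  have hc : c ^ 2 ≤ 1 := by nlinarith
  have hneg : (-1 : ℝ) ^ 2 = 1 := by norm_num
  have h₃ := normSq_cip_evec_mulVec_evec hcs hs (one_pow 2) c₁ s₁ k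
  have h₄ := normSq_cip_evec_mulVec_evec hcs hs hneg c₁ s₁ k
  have hψ := normSq_cip_evec_add_normSq_cip_evec hcs hs k ![α, β]
  rw [neg_neg] at h₄
  simp only [Matrix.cons_val_zero, Matrix.cons_val_one] at hψ
  simp only [Athree, Afour, Complex.normSq_mul, lam_normSq hc (one_pow 2), lam_normSq hc hneg,
    h₃, h₄, one_mul]
  linear_combination
    ((c₁ * s - s₁ * c) ^ 2 * cos k ^ 2 / (1 - c ^ 2 * sin k ^ 2)) * (hψ.trans hαβ)

end

theorem sin_ne_zero_of_mem_Ico {θ : ℝ} (hθ : θ ∈ Set.Ico 0 (2 * π)) (h0 : θ ≠ 0)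
    (hπ : θ ≠ π) : sin θ ≠ 0 := by
  rcases lt_or_gt_of_ne hπ with hlt | hgt
  · exact (sin_pos_of_pos_of_lt_pi (lt_of_le_of_ne hθ.1 h0.symm) hlt).ne'
  · have := sin_pos_of_pos_of_lt_pi (sub_pos.2 hgt) (by linarith [hθ.2])
    rw [sin_sub_pi] at this
    linarith

theorem stmt14_general
    (θ : ℝ)
    (hθmem : θ ∈ Set.Ico (0 : ℝ) (2 * Real.pi))
    (hθ0 : θ ≠ 0) (hθpi : θ ≠ Real.pi)
    (c s c₁ s₁ : ℝ)
    (hc : c = Real.cos θ) (hs : s = Real.sin θ)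
    (α β : ℂ) (hαβ : Complex.normSq α + Complex.normSq β = 1) :
    (∫ k in (-Real.pi)..Real.pi,
        (Complex.normSq (Athree c s c₁ s₁ α β k) + Complex.normSq (Afour c s c₁ s₁ α β k)))
        / (2 * Real.pi)
      = (c₁ * s - s₁ * c) ^ 2 / (1 + |s|) := by
  have hcs : c ^ 2 + s ^ 2 = 1 := by rw [hc, hs]; exact cos_sq_add_sin_sq θ
  have hs0 : s ≠ 0 := hs ▸ sin_ne_zero_of_mem_Ico hθmem hθ0 hθpi
  have hc2 : c ^ 2 < 1 := by nlinarith [sq_pos_of_ne_zero hs0]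
  have hroot : √(1 - c ^ 2) = |s| := by rw [← Real.sqrt_sq_eq_abs]; congr 1; linarith
  simp_rw [normSq_Athree_add_normSq_Afour hcs hs0 c₁ s₁ hαβ, mul_div_assoc]
  rw [intervalIntegral.integral_const_mul, integral_cos_sq_div_one_sub_mul_sin_sq hc2, hroot]
  field_simp

theorem stmt14
    (θ θ₁ : ℝ)
    (hθmem : θ ∈ Set.Ico (0 : ℝ) (2 * Real.pi))
    (hθ₁mem : θ₁ ∈ Set.Ico (0 : ℝ) (2 * Real.pi))
    (hθ0 : θ ≠ 0) (hθhalf : θ ≠ Real.pi / 2) (hθpi : θ ≠ Real.pi)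
    (hθ3half : θ ≠ 3 * Real.pi / 2)
    (c s c₁ s₁ : ℝ)
    (hc : c = Real.cos θ) (hs : s = Real.sin θ)
    (hc₁ : c₁ = Real.cos θ₁) (hs₁ : s₁ = Real.sin θ₁)
    (α β : ℂ) (hαβ : Complex.normSq α + Complex.normSq β = 1) :
    (∫ k in (-Real.pi)..Real.pi,
        (Complex.normSq (Athree c s c₁ s₁ α β k) + Complex.normSq (Afour c s c₁ s₁ α β k)))
        / (2 * Real.pi)
      = (c₁ * s - s₁ * c) ^ 2 / (1 + |s|) :=
  stmt14_general θ hθmem hθ0 hθpi c s c₁ s₁ hc hs α β hαβ
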